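/- Let W be a 2-dimensional subspace of (ZMod 2)^4, let u1, u2, u3 be its three nonzero elements, and let v, v' ∈ (ZMod 2)^4 with v ∉ W and v' ∉ W. Then there exists w ∈ (ZMod 2)^4 such that for all 1 ≤ i < j ≤ 3 and for each u ∈ {v, v'}, the family {u_i, u_j, u, w} is linearly independent over ZMod 2 (hence a basis of (ZMod 2)^4). -/

import Mathlib

/-!
Let `A = W ⊔ span {v}` and `B = W ⊔ span {v'}`. Both have dimension at most `3 < 4`, so they are
proper, and an additive group is never the union of two proper subgroups: pick `w ∉ A ∪ B`.
Over `𝔽₂` two distinct nonzero vectors are independent, so any two of `u₁, u₂, u₃` are independent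
inside `W`; adjoining `u ∉ W` and then `w ∉ W ⊔ span {u}` keeps the family independent.
-/

open Submodule

theorem Submodule.exists_notMem_and_notMem {R M : Type*} [Ring R] [AddCommGroup M] [Module R M]
    {A B : Submodule R M} (hA : A ≠ ⊤) (hB : B ≠ ⊤) : ∃ x, x ∉ A ∧ x ∉ B := by
  by_contra! hcover
  have : ((⊤ : Submodule R M) : Set M) ⊆ A ∪ B := fun x _ ↦ or_iff_not_imp_left.mpr (hcover x)
  rcases AddSubgroupClass.subset_union.mp this with h | h
  exacts [hA (top_le_iff.mp h), hB (top_le_iff.mp h)]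

section DivisionRing

variable {K V : Type*} [DivisionRing K] [AddCommGroup V] [Module K V]

theorem Submodule.sup_span_singleton_ne_top [FiniteDimensional K V] {W : Submodule K V}
    (hW : Module.finrank K W + 1 < Module.finrank K V) (v : V) : W ⊔ K ∙ v ≠ ⊤ := by
  intro htop
  have hle : Module.finrank K ↥(W ⊔ K ∙ v) ≤ Module.finrank K W + 1 :=
    (finrank_add_le_finrank_add_finrank W _).trans
      (Nat.add_le_add_left ((finrank_span_le_card {v}).trans (by simp)) _)
  rw [htop, finrank_top] at hle
  omega

theorem LinearIndependent.finSnoc_of_range_subset {n : ℕ} {f : Fin n → V} {W : Submodule K V}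
    (hf : LinearIndependent K f) (hfW : Set.range f ⊆ W) {x : V} (hx : x ∉ W) :
    LinearIndependent K (Fin.snoc f x : Fin (n + 1) → V) :=
  linearIndependent_finSnoc.mpr ⟨hf, fun h ↦ hx (span_le.mpr hfW h)⟩

theorem linearIndependent_four_of_notMem_sup {W : Submodule K V} {a b u w : V}
    (hab : LinearIndependent K ![a, b]) (ha : a ∈ W) (hb : b ∈ W) (hu : u ∉ W)
    (hw : w ∉ W ⊔ K ∙ u) : LinearIndependent K ![a, b, u, w] := by
  have habu : LinearIndependent K ![a, b, u] := by
    simpa using hab.finSnoc_of_range_subset (by simp [Set.insert_subset_iff, ha, hb]) hu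
  simpa using habu.finSnoc_of_range_subset (W := W ⊔ K ∙ u)
    (by simp [Set.insert_subset_iff, mem_sup_left ha, mem_sup_left hb,
      mem_sup_right (mem_span_singleton_self u)]) hw

end DivisionRing

theorem linearIndependent_pair_zmod_two {V : Type*} [AddCommGroup V] [Module (ZMod 2) V]
    {x y : V} (hx : x ≠ 0) (hy : y ≠ 0) (hxy : x ≠ y) : LinearIndependent (ZMod 2) ![x, y] := by
  rw [LinearIndependent.pair_iff' hx]
  intro c
  obtain rfl | rfl : c = 0 ∨ c = 1 := by revert c; decide
  exacts [by simpa using hy.symm, by simpa using hxy]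

/-- Coordinate-free bad-edge resolution: if `W ≤ (ZMod 2)⁴` is a 2-dimensional
subspace with nonzero elements `u1, u2, u3`, and `v, v' ∉ W`, then there is a
vector `w` such that for all `1 ≤ i < j ≤ 3` and each `u ∈ {v, v'}` the family
`{u_i, u_j, u, w}` is linearly independent. -/
theorem bad_edge_resolution_coordinate_free
    (W : Submodule (ZMod 2) (Fin 4 → ZMod 2))
    (hW : Module.finrank (ZMod 2) W = 2)
    (u1 u2 u3 : Fin 4 → ZMod 2)
    (hu1 : u1 ∈ W) (hu2 : u2 ∈ W) (hu3 : u3 ∈ W)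
    (h1 : u1 ≠ 0) (h2 : u2 ≠ 0) (h3 : u3 ≠ 0)
    (h12 : u1 ≠ u2) (h13 : u1 ≠ u3) (h23 : u2 ≠ u3)
    (v v' : Fin 4 → ZMod 2) (hv : v ∉ W) (hv' : v' ∉ W) :
    ∃ w : Fin 4 → ZMod 2, ∀ u ∈ ({v, v'} : Set (Fin 4 → ZMod 2)),
      LinearIndependent (ZMod 2) ![u1, u2, u, w] ∧
      LinearIndependent (ZMod 2) ![u1, u3, u, w] ∧
      LinearIndependent (ZMod 2) ![u2, u3, u, w] := by
  have hdim : Module.finrank (ZMod 2) W + 1 < Module.finrank (ZMod 2) (Fin 4 → ZMod 2) := by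
    simp [hW]
  obtain ⟨w, hwv, hwv'⟩ := exists_notMem_and_notMem
    (sup_span_singleton_ne_top hdim v) (sup_span_singleton_ne_top hdim v')
  have key : ∀ u ∉ W, w ∉ W ⊔ ZMod 2 ∙ u →
      LinearIndependent (ZMod 2) ![u1, u2, u, w] ∧
      LinearIndependent (ZMod 2) ![u1, u3, u, w] ∧
      LinearIndependent (ZMod 2) ![u2, u3, u, w] := fun u hu hw ↦
    ⟨linearIndependent_four_of_notMem_sup (linearIndependent_pair_zmod_two h1 h2 h12) hu1 hu2 hu hw,
      linearIndependent_four_of_notMem_sup (linearIndependent_pair_zmod_two h1 h3 h13) hu1 hu3 hu hw,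
      linearIndependent_four_of_notMem_sup (linearIndependent_pair_zmod_two h2 h3 h23) hu2 hu3 hu hw⟩
  refine ⟨w, ?_⟩
  rintro u (rfl | rfl)
  exacts [key u hv hwv, key u hv' hwv']
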